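/- Let u be harmonic on a domain containing concentric balls B_{ρ}(y), B_{3ρ}(y), B_{4ρ}(y). If ∫_{B_{ρ}} u² ≤ A^τ E^{2(1-τ)} with ∫_{B_{4ρ}} u² ≤ E², where 0 < τ < 1 is the three-spheres exponent, then iterating along a chain of s balls y₀,…,y_s with B_{ρ}(y_{i}) ⊂ B_{3ρ}(y_{i+1}) yields ∫_{B_{ρ}(y₀)} u² ≤ (∫_{B_{ρ}(y_s)} u²)^{τ^s} · E^{2(1-τ^s)}. -/

import Mathlib

/-!
Each three-spheres inequality, with the outer integral bounded by `E²` and the inner ball of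
`y i` contained in the middle ball of `y (i + 1)`, bounds the `L²` mass of `u` on `B_ρ(y i)` by
that on `B_ρ(y (i + 1))` to the power `τ`, times `(E²)^(1 - τ)`. Chaining these `s` estimates
multiplies the exponents, and the powers of `E²` add up to `(E²)^(1 - τ^s)`.
-/

open MeasureTheory Metric

theorem le_rpow_pow_mul_rpow_of_chain {a : ℕ → ℝ} {M τ : ℝ} (ha : ∀ k, 0 ≤ a k)
    (hM : 0 < M) (hτ : 0 ≤ τ) {s : ℕ} (hstep : ∀ k < s, a k ≤ a (k + 1) ^ τ * M ^ (1 - τ)) :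
    a 0 ≤ a s ^ (τ ^ s) * M ^ (1 - τ ^ s) := by
  induction s with
  | zero => simp
  | succ s ih =>
    calc a 0 ≤ a s ^ (τ ^ s) * M ^ (1 - τ ^ s) := ih fun k hk => hstep k (by omega)
      _ ≤ (a (s + 1) ^ τ * M ^ (1 - τ)) ^ (τ ^ s) * M ^ (1 - τ ^ s) := by
        gcongr
        exacts [ha s, hstep s s.lt_succ_self]
      _ = a (s + 1) ^ (τ ^ (s + 1)) * M ^ (1 - τ ^ (s + 1)) := by
        rw [Real.mul_rpow (Real.rpow_nonneg (ha _) _) (Real.rpow_nonneg hM.le _),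
          ← Real.rpow_mul (ha _), ← Real.rpow_mul hM.le, mul_assoc, ← Real.rpow_add hM, pow_succ']
        ring_nf

theorem ContinuousOn.integrableOn_ball_of_lt {X : Type*} [MetricSpace X] [ProperSpace X]
    [MeasurableSpace X] [OpensMeasurableSpace X] {μ : Measure X} [IsFiniteMeasureOnCompacts μ]
    {F : Type*} [NormedAddCommGroup F] {f : X → F} {x : X} {r R : ℝ}
    (hf : ContinuousOn f (ball x R)) (hrR : r < R) :
    IntegrableOn f (ball x r) μ :=
  ((hf.mono (closedBall_subset_ball hrR)).integrableOn_compact (isCompact_closedBall x r)).mono_set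
    ball_subset_closedBall

theorem three_spheres_iteration_general {n : ℕ}
    (u : EuclideanSpace ℝ (Fin n) → ℝ) (Ω : Set (EuclideanSpace ℝ (Fin n)))
    (ρ E τ : ℝ) (hρ : 0 < ρ) (hE : 0 < E)
    (hτ0 : 0 < τ) (hτ1 : τ < 1)
    (s : ℕ) (y : ℕ → EuclideanSpace ℝ (Fin n))
    (hballs : ∀ i ≤ s, ball (y i) (4 * ρ) ⊆ Ω)
    (hsmooth : ContDiffOn ℝ 2 u Ω)
    (h3s : ∀ i ≤ s,
      (∫ x in ball (y i) (3 * ρ), (u x) ^ 2) ≤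
        (∫ x in ball (y i) ρ, (u x) ^ 2) ^ τ *
          (∫ x in ball (y i) (4 * ρ), (u x) ^ 2) ^ (1 - τ))
    (hchain : ∀ i < s, ball (y i) ρ ⊆ ball (y (i + 1)) (3 * ρ))
    (hEbound : ∀ i ≤ s, (∫ x in ball (y i) (4 * ρ), (u x) ^ 2) ≤ E ^ 2) :
    (∫ x in ball (y 0) ρ, (u x) ^ 2) ≤
      (∫ x in ball (y s) ρ, (u x) ^ 2) ^ (τ ^ s) * E ^ (2 * (1 - τ ^ s)) := by
  have hstep : ∀ k < s, (∫ x in ball (y k) ρ, u x ^ 2) ≤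
      (∫ x in ball (y (k + 1)) ρ, u x ^ 2) ^ τ * (E ^ 2) ^ (1 - τ) := by
    intro k hk
    have hint : IntegrableOn (fun x => u x ^ 2) (ball (y (k + 1)) (3 * ρ)) :=
      ((hsmooth.continuousOn.mono (hballs (k + 1) hk)).pow 2).integrableOn_ball_of_lt
        (by linarith)
    calc (∫ x in ball (y k) ρ, u x ^ 2) ≤ ∫ x in ball (y (k + 1)) (3 * ρ), u x ^ 2 :=
          setIntegral_mono_set hint (ae_of_all _ fun _ => sq_nonneg _) (hchain k hk).eventuallyLE
      _ ≤ _ := h3s (k + 1) hk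
      _ ≤ _ := by
        gcongr
        exact hEbound (k + 1) hk
  calc (∫ x in ball (y 0) ρ, u x ^ 2)
      ≤ (∫ x in ball (y s) ρ, u x ^ 2) ^ (τ ^ s) * (E ^ 2) ^ (1 - τ ^ s) :=
        le_rpow_pow_mul_rpow_of_chain (a := fun k => ∫ x in ball (y k) ρ, u x ^ 2)
          (fun _ => by positivity) (by positivity) hτ0.le hstep
    _ = _ := by rw [Real.rpow_mul hE.le, Real.rpow_two]

theorem three_spheres_iteration {n : ℕ}
    (u : EuclideanSpace ℝ (Fin n) → ℝ) (Ω : Set (EuclideanSpace ℝ (Fin n)))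
    (hΩ : IsOpen Ω) (ρ E τ : ℝ) (hρ : 0 < ρ) (hE : 0 < E)
    (hτ0 : 0 < τ) (hτ1 : τ < 1)
    (s : ℕ) (y : ℕ → EuclideanSpace ℝ (Fin n))
    (hballs : ∀ i ≤ s, ball (y i) (4 * ρ) ⊆ Ω)
    (hsmooth : ContDiffOn ℝ 2 u Ω)
    (hharm : ∀ x ∈ Ω,
      ∑ i : Fin n, iteratedFDeriv ℝ 2 u x (fun _ => EuclideanSpace.single i (1 : ℝ)) = 0)
    (h3s : ∀ i ≤ s,
      (∫ x in ball (y i) (3 * ρ), (u x) ^ 2) ≤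
        (∫ x in ball (y i) ρ, (u x) ^ 2) ^ τ *
          (∫ x in ball (y i) (4 * ρ), (u x) ^ 2) ^ (1 - τ))
    (hchain : ∀ i < s, ball (y i) ρ ⊆ ball (y (i + 1)) (3 * ρ))
    (hEbound : ∀ i ≤ s, (∫ x in ball (y i) (4 * ρ), (u x) ^ 2) ≤ E ^ 2) :
    (∫ x in ball (y 0) ρ, (u x) ^ 2) ≤
      (∫ x in ball (y s) ρ, (u x) ^ 2) ^ (τ ^ s) * E ^ (2 * (1 - τ ^ s)) :=
  three_spheres_iteration_general u Ω ρ E τ hρ hE hτ0 hτ1 s y hballs hsmooth h3s hchain hEbound
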